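/- arXiv:0905.4066 — 9 statements merged into one kernel-verified Lean document; each statement's English description precedes it below -/
import Mathlib

section
/- If r is a simulation from w₁ to w₂ and r' is a simulation from w₁' to w₂', then the relation r ⊗ r' on (S₁ × S₁') × (S₂ × S₂'), defined by ((s₁,s₁'),(s₂,s₂')) ∈ r ⊗ r' iff (s₁,s₂) ∈ r and (s₁',s₂') ∈ r', is a simulation from w₁ ⊗ w₁' to w₂ ⊗ w₂'. -/
universe u

/-- An interaction system on a set of states `S`. -/
structure IS (S : Type u) where
  A : S → Type u
  D : (s : S) → A s → Type u
  n : (s : S) → (a : A s) → D s a → S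

/-- `r` is a simulation from `w₁` to `w₂`. -/
def IsSim {S₁ S₂ : Type u} (w₁ : IS S₁) (w₂ : IS S₂) (r : S₁ → S₂ → Prop) : Prop :=
  ∀ s₁ s₂, r s₁ s₂ → ∀ a₁ : w₁.A s₁, ∃ a₂ : w₂.A s₂,
    ∀ d₂ : w₂.D s₂ a₂, ∃ d₁ : w₁.D s₁ a₁, r (w₁.n s₁ a₁ d₁) (w₂.n s₂ a₂ d₂)
/-- Synchronous product of interaction systems. -/
def tensor {S₁ S₂ : Type u} (w₁ : IS S₁) (w₂ : IS S₂) : IS (S₁ × S₂) where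
  A s := w₁.A s.1 × w₂.A s.2
  D s a := w₁.D s.1 a.1 × w₂.D s.2 a.2
  n s a d := (w₁.n s.1 a.1 d.1, w₂.n s.2 a.2 d.2)

/-- The tensor product of two simulations is a simulation between the
synchronous products. -/
theorem tensor_isSim {S₁ S₂ S₁' S₂' : Type u}
    {w₁ : IS S₁} {w₂ : IS S₂} {w₁' : IS S₁'} {w₂' : IS S₂'}
    {r : S₁ → S₂ → Prop} {r' : S₁' → S₂' → Prop}
    (h : IsSim w₁ w₂ r) (h' : IsSim w₁' w₂' r') :
    IsSim (tensor w₁ w₁') (tensor w₂ w₂')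
      (fun p q => r p.1 q.1 ∧ r' p.2 q.2) := by
  rintro ⟨s₁, s₁'⟩ ⟨s₂, s₂'⟩ ⟨hr, hr'⟩ ⟨a₁, a₁'⟩
  obtain ⟨a₂, ha⟩ := h s₁ s₂ hr a₁
  obtain ⟨a₂', ha'⟩ := h' s₁' s₂' hr' a₁'
  refine ⟨(a₂, a₂'), ?_⟩
  rintro ⟨d₂, d₂'⟩
  obtain ⟨d₁, hd⟩ := ha d₂
  obtain ⟨d₁', hd'⟩ := ha' d₂'
  exact ⟨(d₁, d₁'), hd, hd'⟩
end

section
/- A relation r ⊆ (S₁ × S₂) × S₃ is a simulation from w₁ ⊗ w₂ to w₃ if and only if the corresponding relation r' ⊆ S₁ × (S₂ × S₃) (obtained by re-associating the tuples) is a simulation from w₁ to w₂ ⊸ w₃. In other words, tensor is left adjoint to the linear arrow: simulations w₁ ⊗ w₂ → w₃ correspond bijectively and naturally to simulations w₁ → (w₂ ⊸ w₃). -/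
universe u

/-- The linear arrow `w₂ ⊸ w₃`. -/
def lolli {S₂ S₃ : Type u} (w₂ : IS S₂) (w₃ : IS S₃) : IS (S₂ × S₃) where
  A s := Σ f : w₂.A s.1 → w₃.A s.2, ∀ a₂ : w₂.A s.1, w₃.D s.2 (f a₂) → w₂.D s.1 a₂
  D s a := Σ a₂ : w₂.A s.1, w₃.D s.2 (a.1 a₂)
  n s a d := (w₂.n s.1 d.1 (a.2 d.1 d.2), w₃.n s.2 (a.1 d.1) d.2)

/-- Tensor is left adjoint to the linear arrow: `r ⊆ (S₁ × S₂) × S₃` is a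
simulation from `w₁ ⊗ w₂` to `w₃` if and only if the re-associated relation
`r' ⊆ S₁ × (S₂ × S₃)` is a simulation from `w₁` to `w₂ ⊸ w₃`. -/
theorem tensor_lolli_adjunction {S₁ S₂ S₃ : Type u}
    (w₁ : IS S₁) (w₂ : IS S₂) (w₃ : IS S₃) (r : S₁ × S₂ → S₃ → Prop) :
    IsSim (tensor w₁ w₂) w₃ r ↔
      IsSim w₁ (lolli w₂ w₃) (fun s₁ p => r (s₁, p.1) p.2) := by
  constructor
  · intro h s₁ p hr a₁
    obtain ⟨s₂, s₃⟩ := p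
    choose f g hg using fun a₂ => h (s₁, s₂) s₃ hr (a₁, a₂)
    refine ⟨⟨f, fun a₂ d₃ => (g a₂ d₃).2⟩, ?_⟩
    rintro ⟨a₂, d₃⟩
    exact ⟨(g a₂ d₃).1, hg a₂ d₃⟩
  · intro h p s₃ hr a
    obtain ⟨s₁, s₂⟩ := p
    obtain ⟨a₁, a₂⟩ := a
    obtain ⟨⟨f, G⟩, hfg⟩ := h s₁ (s₂, s₃) hr a₁
    refine ⟨f a₂, fun d₃ => ?_⟩
    obtain ⟨d₁, hd⟩ := hfg ⟨a₂, d₃⟩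
    exact ⟨(d₁, G a₂ d₃), hd⟩
end

section
/- A subset x ⊆ S is a safety property for an interaction system w (i.e., s ∈ x implies there exists a ∈ A(s) such that for all d ∈ D(s,a), s[a/d] ∈ x) if and only if the relation {(*, s) | s ∈ x} is a simulation from the unit interaction system 1 to w. -/
universe u

/-- The unit interaction system `1` on a singleton state space. -/
def unitIS : IS PUnit.{u+1} where
  A _ := PUnit
  D _ _ := PUnit
  n _ _ _ := ⟨⟩

/-- A subset `x ⊆ S` is a safety property for `w` iff the relation
`{(*, s) | s ∈ x}` is a simulation from the unit interaction system `1` to `w`. -/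
theorem safety_iff_sim_from_unit {S : Type u} (w : IS S) (x : Set S) :
    (∀ s ∈ x, ∃ a : w.A s, ∀ d : w.D s a, w.n s a d ∈ x) ↔
      IsSim unitIS w (fun _ s => s ∈ x) := by
  constructor
  · intro h _ s hs _
    obtain ⟨a, ha⟩ := h s hs
    exact ⟨a, fun d => ⟨⟨⟩, ha d⟩⟩
  · intro h s hs
    obtain ⟨a, ha⟩ := h ⟨⟩ s hs ⟨⟩
    refine ⟨a, fun d => ?_⟩
    obtain ⟨_, h2⟩ := ha d
    exact h2
end

section
/- For any interaction system w on S, the relation ε_w = {([s], s) | s ∈ S} ⊆ Multiset S × S is a simulation from !w to w. -/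
universe u

/-- Lists of actions for a list of states (multithreading). -/
def listA {S : Type u} (w : IS S) : List S → Type u
  | [] => PUnit
  | s :: l => w.A s × listA w l

/-- Lists of reactions to a list of actions. -/
def listD {S : Type u} (w : IS S) : (l : List S) → listA w l → Type u
  | [], _ => PUnit
  | _ :: l, a => w.D _ a.1 × listD w l a.2

/-- Componentwise next states. -/
def listN {S : Type u} (w : IS S) : (l : List S) → (a : listA w l) → listD w l a → List S
  | [], _, _ => []
  | s :: l, a, d => w.n s a.1 d.1 :: listN w l a.2 d.2

/-- The exponential `!w`, on finite multisets of states. -/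
def bang {S : Type u} (w : IS S) : IS (Multiset S) where
  A μ := Σ' (l : List S) (_ : (↑l : Multiset S) = μ), listA w l
  D _ a := listD w a.1 a.2.2
  n _ a d := ↑(listN w a.1 a.2.2 d)

/-- The counit `ε_w = {([s], s) | s ∈ S}` is a simulation from `!w` to `w`. -/
theorem eps_isSim {S : Type u} (w : IS S) :
    IsSim (bang w) w (fun μ s => μ = {s}) := by
  rintro μ s rfl ⟨l, hl, a⟩
  rw [Multiset.coe_eq_singleton] at hl
  subst hl
  exact ⟨a.1, fun d₂ => ⟨⟨d₂, PUnit.unit⟩, rfl⟩⟩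
end

section
/- For any interaction system w on S, the relation δ_w = {([μ₁,...,μₙ], μ₁ + ... + μₙ)} ⊆ Multiset (Multiset S) × Multiset S (the graph of multiset concatenation/sum) is a simulation from !!w to !w. -/
universe u

/-! A `!!w`-action on `[μ₁, …, μₙ]` consists of `!w`-actions on the `μᵢ`, i.e. lists `lᵢ` of
states with actions on them; concatenating them gives a `!w`-action on `μ₁ + ⋯ + μₙ`. A reaction
to the concatenated action splits back into reactions to the pieces, and the next states match
because `listN` commutes with this concatenation and splitting. -/

namespace listA

variable {S : Type u} {w : IS S}

def append : ∀ {l₁ l₂ : List S}, listA w l₁ → listA w l₂ → listA w (l₁ ++ l₂)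
  | [], _, _, b => b
  | _ :: _, _, a, b => (a.1, append a.2 b)

end listA

namespace listD

variable {S : Type u} {w : IS S}

def left : ∀ {l₁ l₂ : List S} (a : listA w l₁) (b : listA w l₂),
    listD w (l₁ ++ l₂) (a.append b) → listD w l₁ a
  | [], _, _, _, _ => PUnit.unit
  | _ :: _, _, a, b, d => (d.1, left a.2 b d.2)

def right : ∀ {l₁ l₂ : List S} (a : listA w l₁) (b : listA w l₂),
    listD w (l₁ ++ l₂) (a.append b) → listD w l₂ b
  | [], _, _, _, d => d
  | _ :: _, _, a, b, d => right a.2 b d.2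

end listD

section

variable {S : Type u} (w : IS S)

theorem listN_append : ∀ {l₁ l₂ : List S} (a : listA w l₁) (b : listA w l₂)
    (d : listD w (l₁ ++ l₂) (a.append b)),
    listN w (l₁ ++ l₂) (a.append b) d
      = listN w l₁ a (listD.left a b d) ++ listN w l₂ b (listD.right a b d)
  | [], _, _, _, _ => rfl
  | _ :: _, _, a, b, d => congrArg (_ :: ·) (listN_append a.2 b d.2)

def flatStates : (L : List (Multiset S)) → listA (bang w) L → List S
  | [], _ => []
  | _ :: L, a => a.1.1 ++ flatStates L a.2

def flatA : (L : List (Multiset S)) → (a : listA (bang w) L) → listA w (flatStates w L a)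
  | [], _ => PUnit.unit
  | _ :: L, a => a.1.2.2.append (flatA L a.2)

def unflatD : (L : List (Multiset S)) → (a : listA (bang w) L) →
    listD w (flatStates w L a) (flatA w L a) → listD (bang w) L a
  | [], _, _ => PUnit.unit
  | _ :: L, a, d => (listD.left _ _ d, unflatD L a.2 (listD.right _ _ d))

theorem coe_flatStates : ∀ (L : List (Multiset S)) (a : listA (bang w) L),
    (flatStates w L a : Multiset S) = (L : Multiset (Multiset S)).sum
  | [], _ => rfl
  | _ :: L, a => by
    rw [flatStates, ← Multiset.coe_add, coe_flatStates L a.2, a.1.2.1, ← Multiset.cons_coe,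
      Multiset.sum_cons]

theorem coe_listN_flatA : ∀ (L : List (Multiset S)) (a : listA (bang w) L)
    (d : listD w (flatStates w L a) (flatA w L a)),
    (listN w _ (flatA w L a) d : Multiset S)
      = (listN (bang w) L a (unflatD w L a d) : Multiset (Multiset S)).sum
  | [], _, _ => rfl
  | _ :: L, ⟨⟨l, _, a⟩, as⟩, d => by
    refine (congrArg ((↑) : List S → Multiset S) (listN_append w a (flatA w L as) d)).trans ?_
    rw [← Multiset.coe_add, coe_listN_flatA L]
    rfl

end

/-- The graph of multiset sum (concatenation)
`δ_w = {([μ₁,…,μₙ], μ₁ + ⋯ + μₙ)}` is a simulation from `!!w` to `!w`. -/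
theorem delta_isSim {S : Type u} (w : IS S) :
    IsSim (bang (bang w)) (bang w)
      (fun (M : Multiset (Multiset S)) (μ : Multiset S) => M.sum = μ) := by
  rintro _ _ rfl ⟨L, rfl, a⟩
  exact ⟨⟨flatStates w L a, coe_flatStates w L a, flatA w L a⟩,
    fun d => ⟨unflatD w L a d, (coe_listN_flatA w L a d).symm⟩⟩
end

section
/- Finite multisets form a comonad on the category Rel of sets and relations: defining !S = Multiset S, with !r relating multisets pointwise (via list representatives of equal length related by r), counit ε_S = {([s], s)} and comultiplication δ_S = the graph of multiset sum, the comonad equations ε · δ = id, !ε · δ = id, and δ · δ = !δ · δ hold. -/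
universe u

/-- Relational composition: `(relComp r₂ r₁) s₁ s₃ ↔ ∃ s₂, r₁ s₁ s₂ ∧ r₂ s₂ s₃`. -/
def relComp {S₁ S₂ S₃ : Type u} (r₂ : S₂ → S₃ → Prop) (r₁ : S₁ → S₂ → Prop) :
    S₁ → S₃ → Prop :=
  fun s₁ s₃ => ∃ s₂, r₁ s₁ s₂ ∧ r₂ s₂ s₃

/-- Pointwise lifting of a relation to finite multisets: `μ₁` and `μ₂` are
related iff they have list representatives of equal length that are pointwise
related by `r`. -/
def bangRel {S₁ S₂ : Type u} (r : S₁ → S₂ → Prop) :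
    Multiset S₁ → Multiset S₂ → Prop :=
  fun μ₁ μ₂ => ∃ (l₁ : List S₁) (l₂ : List S₂), (↑l₁ : Multiset S₁) = μ₁ ∧
    (↑l₂ : Multiset S₂) = μ₂ ∧ List.Forall₂ r l₁ l₂

/-- The counit `ε_S = {([s], s) | s ∈ S}` of the multiset comonad on `Rel`. -/
def eps (S : Type u) : Multiset S → S → Prop := fun μ s => μ = {s}

/-- The comultiplication `δ_S`: the graph of multiset sum (concatenation),
oriented as a morphism `!S → !!S` of `Rel`. -/
def delta (S : Type u) : Multiset S → Multiset (Multiset S) → Prop :=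
  fun μ M => M.sum = μ


lemma list_sum_map_sum {α : Type u} [AddCommMonoid α] (l : List (Multiset α)) :
    (l.map Multiset.sum).sum = l.sum.sum := by
  induction l with
  | nil => simp
  | cons a t ih => simp [ih]

lemma sum_map_sum {α : Type u} [AddCommMonoid α] (M : Multiset (Multiset α)) :
    (M.map Multiset.sum).sum = M.sum.sum := by
  induction M using Multiset.induction with
  | empty => simp
  | cons a s ih => simp [ih]

lemma forall2_map_left {α β : Type u} (r : α → β → Prop) (f : β → α)
    (h : ∀ b, r (f b) b) (l : List β) : List.Forall₂ r (l.map f) l := by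
  induction l with
  | nil => exact List.Forall₂.nil
  | cons a l ih => exact List.Forall₂.cons (h a) ih

lemma forall2_eps_eq {S : Type u} {l₁ : List (Multiset S)} {l₂ : List S}
    (h : List.Forall₂ (eps S) l₁ l₂) : l₁ = l₂.map (fun s => ({s} : Multiset S)) := by
  induction h with
  | nil => rfl
  | cons h _ ih => simp_all [eps]

lemma forall2_delta_eq {S : Type u} {l₁ : List (Multiset S)}
    {l₂ : List (Multiset (Multiset S))}
    (h : List.Forall₂ (delta S) l₁ l₂) : l₁ = l₂.map Multiset.sum := by
  induction h with
  | nil => rfl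
  | cons h _ ih => simp_all [delta]

lemma sum_map_singleton {α : Type u} (l : List α) :
    (l.map (fun s => ({s} : Multiset α))).sum = (↑l : Multiset α) := by
  induction l with
  | nil => rfl
  | cons a t ih => simp [ih]

/-- Finite multisets form a comonad on the category `Rel` of sets and
relations: the comonad equations `ε · δ = id`, `!ε · δ = id` and
`δ · δ = !δ · δ` hold. -/
theorem multiset_comonad_rel (S : Type u) :
    relComp (eps (Multiset S)) (delta S) = (fun μ₁ μ₂ => μ₁ = μ₂) ∧
    relComp (bangRel (eps S)) (delta S) = (fun μ₁ μ₂ => μ₁ = μ₂) ∧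
    relComp (delta (Multiset S)) (delta S) =
      relComp (bangRel (delta S)) (delta S) := by
  refine ⟨?_, ?_, ?_⟩
  · funext μ₁ μ₂
    apply propext
    constructor
    · rintro ⟨M, hs, hM⟩
      rw [eps] at hM
      subst hM
      simpa [delta] using hs.symm
    · rintro rfl
      exact ⟨{μ₁}, by simp [delta], rfl⟩
  · funext μ₁ μ₂
    apply propext
    constructor
    · rintro ⟨M, hs, l₁, l₂, h1, h2, hf⟩
      rw [forall2_eps_eq hf] at h1
      rw [delta] at hs
      subst h1 h2 hs
      simp [sum_map_singleton]
    · rintro rfl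
      refine ⟨↑(μ₁.toList.map (fun s => ({s} : Multiset S))), ?_,
        μ₁.toList.map (fun s => ({s} : Multiset S)), μ₁.toList, rfl,
        Multiset.coe_toList μ₁,
        forall2_map_left (eps S) (fun s => ({s} : Multiset S)) (fun b => rfl) _⟩
      show (↑(μ₁.toList.map (fun s => ({s} : Multiset S))) : Multiset (Multiset S)).sum = μ₁
      simp [sum_map_singleton]
  · funext μ₁ M₂
    apply propext
    constructor
    · rintro ⟨M, h1, h2⟩
      rw [delta] at h1 h2
      refine ⟨M₂.map Multiset.sum, ?_,
        M₂.toList.map Multiset.sum, M₂.toList, by rw [← Multiset.map_coe, Multiset.coe_toList], by simp,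
        forall2_map_left (delta S) Multiset.sum (fun b => rfl) _⟩
      rw [delta, sum_map_sum, h2, h1]
    · rintro ⟨M, h1, l₁, l₂, e1, e2, hf⟩
      rw [delta] at h1
      rw [forall2_delta_eq hf] at e1
      refine ⟨M₂.sum, ?_, rfl⟩
      rw [delta, ← h1, ← e1, ← e2]
      show (↑l₂ : Multiset (Multiset (Multiset S))).sum.sum = _
      rw [← sum_map_sum]
      simp
end

section
/- (Soundness of the interpretation) If Γ ⊢ t : ω is derivable in the simply typed λ-calculus, then the relation {(γ, s) | s ∈ [[t]]_γ} is a simulation from !Γ = !ω₁* ⊗ ... ⊗ !ωₙ* to ω*. -/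
universe u

/-- Simple types over base type variables. -/
inductive Ty : Type
  | base : ℕ → Ty
  | arrow : Ty → Ty → Ty

/-- Typed variables in a context. -/
inductive Var : List Ty → Ty → Type
  | vz {Γ ω} : Var (ω :: Γ) ω
  | vs {Γ ω ω'} : Var Γ ω → Var (ω' :: Γ) ω

/-- Intrinsically typed λ-terms. -/
inductive Tm : List Ty → Ty → Type
  | var {Γ ω} : Var Γ ω → Tm Γ ω
  | app {Γ ω ω'} : Tm Γ (.arrow ω ω') → Tm Γ ω → Tm Γ ω'
  | lam {Γ ω ω'} : Tm (ω :: Γ) ω' → Tm Γ (.arrow ω ω')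

variable (ρ : ℕ → Type) (wρ : ∀ i, IS (ρ i))

/-- `|ω|`: the set of states of the interpretation of type `ω`. -/
def St : Ty → Type
  | .base i => ρ i
  | .arrow ω ω' => Multiset (St ω) × St ω'

/-- Interpretation of types: `X* = ρ(X)`, `(ω → ω')* = !ω* ⊸ ω'*`. -/
def tyIS : (ω : Ty) → IS (St ρ ω)
  | .base i => wρ i
  | .arrow ω ω' => lolli (bang (tyIS ω)) (tyIS ω')

/-- Environments for a context: a finite multiset of states for each variable. -/
def Env : List Ty → Type
  | [] => PUnit
  | ω :: Γ => Multiset (St ρ ω) × Env Γ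

/-- The empty environment. -/
def Env.zero : (Γ : List Ty) → Env ρ Γ
  | [] => ⟨⟩
  | _ :: Γ => (0, Env.zero Γ)

/-- Pointwise sum of environments. -/
def Env.add : {Γ : List Ty} → Env ρ Γ → Env ρ Γ → Env ρ Γ
  | [], _, _ => ⟨⟩
  | _ :: _, γ, δ => (γ.1 + δ.1, Env.add γ.2 δ.2)

/-- Sum of a list of environments. -/
def envSum {Γ : List Ty} (L : List (Env ρ Γ)) : Env ρ Γ :=
  L.foldr (Env.add ρ) (Env.zero ρ Γ)

/-- The environment assigning the singleton multiset `[s]` to the variable `v`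
and the empty multiset to every other variable. -/
def oneAt : {Γ : List Ty} → {ω : Ty} → Var Γ ω → St ρ ω → Env ρ Γ
  | _, _, .vz, s => ({s}, Env.zero ρ _)
  | _, _, .vs v, s => (0, oneAt v s)

/-- The interpretation `!Γ = !ω₁* ⊗ ⋯ ⊗ !ωₙ*` of a context. -/
def ctxIS : (Γ : List Ty) → IS (Env ρ Γ)
  | [] => unitIS
  | ω :: Γ => tensor (bang (tyIS ρ wρ ω)) (ctxIS Γ)

/-- The relational interpretation of terms. -/
def interp : {Γ : List Ty} → {ω : Ty} → Tm Γ ω → Env ρ Γ → Set (St ρ ω)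
  | _, _, .var v, γ => {s | γ = oneAt ρ v s}
  | _, _, .app t u, γ => {s | ∃ (γ₀ : Env ρ _) (L : List (Env ρ _ × St ρ _)),
      (∀ p ∈ L, p.2 ∈ interp u p.1) ∧
      γ = Env.add ρ γ₀ (envSum ρ (L.map Prod.fst)) ∧
      ((↑(L.map Prod.snd) : Multiset _), s) ∈ interp t γ₀}
  | _, _, .lam t, γ => {p | p.2 ∈ interp t (p.1, γ)}

/-! Induction on the term. A λ-abstraction is interpreted by currying, which is always a
simulation into `⊸`. A variable uses dereliction `!ω* → ω*` on its own slot and weakening on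
the others: at the empty multiset the only action of `!` is the empty one, which stays there.
For an application `(t)u` at `γ = γ₀ + γ₁ + ⋯ + γₙ`, contraction splits an action of `!Γ` into
one at `γ₀` and one at each `γᵢ`; the simulation of `u` answers the latter with an action of
`!ω*` at `[s₁, …, sₙ]`, which is exactly the argument the simulation of `t` needs to produce its
action of `⊸`. -/

theorem List.forall₂_iff_exists_map {α β : Type*} {R : α → β → Prop} {l₁ : List α}
    {l₂ : List β} :
    List.Forall₂ R l₁ l₂ ↔
      ∃ L : List (α × β), (∀ p ∈ L, R p.1 p.2) ∧ L.map Prod.fst = l₁ ∧ L.map Prod.snd = l₂ := by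
  constructor
  · intro h
    exact ⟨l₁.zip l₂, fun p hp => List.forall₂_zip h hp, List.map_fst_zip h.length_eq.le,
      List.map_snd_zip h.length_eq.ge⟩
  · rintro ⟨L, hL, rfl, rfl⟩
    rwa [List.forall₂_map_left_iff, List.forall₂_map_right_iff, List.forall₂_same]

section InteractionSystems

variable {S S₁ S₂ S₃ : Type u}

theorem IsSim.list {w₁ : IS S₁} {w₂ : IS S₂} {r : S₁ → S₂ → Prop} (hr : IsSim w₁ w₂ r)
    {l₁ : List S₁} {l₂ : List S₂} (h : List.Forall₂ r l₁ l₂) (a : listA w₁ l₁) :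
    ∃ b : listA w₂ l₂, ∀ d₂, ∃ d₁, List.Forall₂ r (listN w₁ l₁ a d₁) (listN w₂ l₂ b d₂) := by
  induction h with
  | nil => exact ⟨⟨⟩, fun _ => ⟨⟨⟩, .nil⟩⟩
  | cons hs _ ih =>
    obtain ⟨b, hb⟩ := hr _ _ hs a.1
    obtain ⟨bs, hbs⟩ := ih a.2
    refine ⟨(b, bs), fun d₂ => ?_⟩
    obtain ⟨d, hd⟩ := hb d₂.1
    obtain ⟨ds, hds⟩ := hbs d₂.2
    exact ⟨(d, ds), .cons hd hds⟩

theorem IsSim.curry {w₁ : IS S₁} {w₂ : IS S₂} {w₃ : IS S₃} {r : S₂ × S₁ → S₃ → Prop}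
    (hr : IsSim (tensor w₂ w₁) w₃ r) :
    IsSim w₁ (lolli w₂ w₃) (fun s p => r (p.1, s) p.2) := by
  intro s p hs a₁
  choose f back hback using fun a₂ : w₂.A p.1 => hr (p.1, s) p.2 hs (a₂, a₁)
  exact ⟨⟨f, fun a₂ d₃ => (back a₂ d₃).1⟩, fun d => ⟨(back d.1 d.2).2, hback d.1 d.2⟩⟩

theorem bang_exists_next_zero (w : IS S) (a : (bang w).A 0) : ∃ d, (bang w).n 0 a d = 0 := by
  obtain ⟨l, hl, -⟩ := a
  obtain rfl : l = [] := (Multiset.coe_eq_zero l).mp hl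
  exact ⟨⟨⟩, rfl⟩

theorem bang_isSim_singleton (w : IS S) : IsSim (bang w) w (fun μ s => μ = {s}) := by
  rintro _ s rfl ⟨l, hl, α⟩
  obtain rfl : l = [s] := Multiset.coe_eq_singleton.mp hl
  exact ⟨α.1, fun d => ⟨(d, ⟨⟩), rfl⟩⟩

theorem listA_exists_split (w : IS S) (l : List S) (α : listA w l) (μ₁ μ₂ : Multiset S)
    (hl : (↑l : Multiset S) = μ₁ + μ₂) :
    ∃ (a₁ : (bang w).A μ₁) (a₂ : (bang w).A μ₂), ∀ d₁ d₂, ∃ d : listD w l α,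
      (↑(listN w l α d) : Multiset S) = (bang w).n μ₁ a₁ d₁ + (bang w).n μ₂ a₂ d₂ := by
  induction l generalizing μ₁ μ₂ with
  | nil =>
    obtain ⟨rfl, rfl⟩ := add_eq_zero.mp hl.symm
    exact ⟨⟨[], rfl, ⟨⟩⟩, ⟨[], rfl, ⟨⟩⟩, fun _ _ => ⟨⟨⟩, rfl⟩⟩
  | cons s l ih =>
    obtain ⟨a, α⟩ := α
    wlog hs : s ∈ μ₁ generalizing μ₁ μ₂
    · have hs₂ : s ∈ μ₂ := (Multiset.mem_add.mp (hl ▸ by simp)).resolve_left hs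
      obtain ⟨a₂, a₁, h⟩ := this μ₂ μ₁ (hl.trans (add_comm _ _)) hs₂
      exact ⟨a₁, a₂, fun d₁ d₂ => (h d₂ d₁).imp fun _ hd => hd.trans (add_comm _ _)⟩
    obtain ⟨μ₁, rfl⟩ := Multiset.exists_cons_of_mem hs
    rw [← Multiset.cons_coe, Multiset.cons_add, Multiset.cons_inj_right] at hl
    obtain ⟨⟨l₁, hl₁, β⟩, a₂, h⟩ := ih α μ₁ μ₂ hl
    refine ⟨⟨s :: l₁, by rw [← Multiset.cons_coe, hl₁], (a, β)⟩, a₂, fun d₁ d₂ => ?_⟩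
    obtain ⟨d, hd⟩ := h d₁.2 d₂
    exact ⟨(d₁.1, d), (congrArg (w.n s a d₁.1 ::ₘ ·) hd).trans (Multiset.cons_add _ _ _).symm⟩

theorem bang_isSim_add (w : IS S) :
    IsSim (bang w) (tensor (bang w) (bang w)) (fun μ ν => μ = ν.1 + ν.2) := by
  rintro _ ⟨μ₁, μ₂⟩ rfl ⟨l, hl, α⟩
  obtain ⟨a₁, a₂, h⟩ := listA_exists_split w l α μ₁ μ₂ hl
  exact ⟨(a₁, a₂), fun d => h d.1 d.2⟩

end InteractionSystems

section Contexts

variable {ρ wρ} {Γ : List Ty}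

theorem ctxIS_exists_next_zero (a : (ctxIS ρ wρ Γ).A (Env.zero ρ Γ)) :
    ∃ d, (ctxIS ρ wρ Γ).n _ a d = Env.zero ρ Γ := by
  induction Γ with
  | nil => exact ⟨⟨⟩, rfl⟩
  | cons ω Γ ih =>
    obtain ⟨d, hd⟩ := bang_exists_next_zero (tyIS ρ wρ ω) a.1
    obtain ⟨d', hd'⟩ := ih a.2
    exact ⟨(d, d'), Prod.ext hd hd'⟩

theorem ctxIS_isSim_add :
    IsSim (ctxIS ρ wρ Γ) (tensor (ctxIS ρ wρ Γ) (ctxIS ρ wρ Γ))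
      (fun γ δ => γ = Env.add ρ δ.1 δ.2) := by
  induction Γ with
  | nil => exact fun _ _ _ _ => ⟨(⟨⟩, ⟨⟩), fun _ => ⟨⟨⟩, rfl⟩⟩
  | cons ω Γ ih =>
    rintro _ ⟨γ₁, γ₂⟩ rfl ⟨a, a'⟩
    obtain ⟨⟨b₁, b₂⟩, hb⟩ := bang_isSim_add (tyIS ρ wρ ω) _ (γ₁.1, γ₂.1) rfl a
    obtain ⟨⟨c₁, c₂⟩, hc⟩ := ih _ (γ₁.2, γ₂.2) rfl a'
    refine ⟨((b₁, c₁), (b₂, c₂)), fun d => ?_⟩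
    obtain ⟨e, he⟩ := hb (d.1.1, d.2.1)
    obtain ⟨e', he'⟩ := hc (d.1.2, d.2.2)
    exact ⟨(e, e'), Prod.ext he he'⟩

theorem ctxIS_exists_split_envSum (L : List (Env ρ Γ)) (a : (ctxIS ρ wρ Γ).A (envSum ρ L)) :
    ∃ as : listA (ctxIS ρ wρ Γ) L, ∀ ds, ∃ d,
      (ctxIS ρ wρ Γ).n _ a d = envSum ρ (listN (ctxIS ρ wρ Γ) L as ds) := by
  induction L with
  | nil => exact ⟨⟨⟩, fun _ => ctxIS_exists_next_zero a⟩
  | cons γ L ih =>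
    obtain ⟨⟨a₁, a₂⟩, h⟩ := ctxIS_isSim_add _ (γ, envSum ρ L) rfl a
    obtain ⟨as, has⟩ := ih a₂
    refine ⟨(a₁, as), fun ds => ?_⟩
    obtain ⟨d, hd⟩ := has ds.2
    obtain ⟨e, he⟩ := h (ds.1, d)
    exact ⟨e, he.trans (congrArg (Env.add ρ _) hd)⟩

theorem ctxIS_isSim_oneAt {ω : Ty} (v : Var Γ ω) :
    IsSim (ctxIS ρ wρ Γ) (tyIS ρ wρ ω) (fun γ s => γ = oneAt ρ v s) := by
  induction v with
  | @vz Γ ω =>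
    rintro _ s rfl ⟨a, a'⟩
    obtain ⟨b, hb⟩ := bang_isSim_singleton (tyIS ρ wρ ω) _ s rfl a
    obtain ⟨d', hd'⟩ := ctxIS_exists_next_zero a'
    refine ⟨b, fun d => ?_⟩
    obtain ⟨e, he⟩ := hb d
    exact ⟨(e, d'), Prod.ext he hd'⟩
  | @vs Γ ω ω' v ih =>
    rintro _ s rfl ⟨a, a'⟩
    obtain ⟨b, hb⟩ := ih _ s rfl a'
    obtain ⟨d, hd⟩ := bang_exists_next_zero (tyIS ρ wρ ω') a
    refine ⟨b, fun e => ?_⟩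
    obtain ⟨e', he'⟩ := hb e
    exact ⟨(d, e'), Prod.ext hd he'⟩

theorem IsSim.app {S S' : Type} {w : IS S} {w' : IS S'}
    {rt : Env ρ Γ → Multiset S × S' → Prop} {ru : Env ρ Γ → S → Prop}
    (ht : IsSim (ctxIS ρ wρ Γ) (lolli (bang w) w') rt) (hu : IsSim (ctxIS ρ wρ Γ) w ru) :
    IsSim (ctxIS ρ wρ Γ) w' (fun γ s => ∃ (γ₀ : Env ρ Γ) (L : List (Env ρ Γ × S)),
      (∀ p ∈ L, ru p.1 p.2) ∧ γ = Env.add ρ γ₀ (envSum ρ (L.map Prod.fst)) ∧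
      rt γ₀ (↑(L.map Prod.snd), s)) := by
  rintro _ s ⟨γ₀, L, hL, rfl, hγ₀⟩ a
  obtain ⟨⟨a₀, aL⟩, hsplit⟩ := ctxIS_isSim_add _ (γ₀, _) rfl a
  obtain ⟨as, has⟩ := ctxIS_exists_split_envSum _ aL
  obtain ⟨bs, hbs⟩ := hu.list (List.forall₂_iff_exists_map.mpr ⟨L, hL, rfl, rfl⟩) as
  let B : (bang w).A ↑(L.map Prod.snd) := ⟨_, rfl, bs⟩
  obtain ⟨f, hf⟩ := ht γ₀ _ hγ₀ a₀
  refine ⟨f.1 B, fun e => ?_⟩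
  obtain ⟨d₀, hd₀⟩ := hf ⟨B, e⟩
  obtain ⟨ds, hds⟩ := hbs (f.2 B e)
  obtain ⟨dL, hdL⟩ := has ds
  obtain ⟨d, hd⟩ := hsplit (d₀, dL)
  obtain ⟨L', hL', hfst, hsnd⟩ := List.forall₂_iff_exists_map.mp hds
  refine ⟨d, (ctxIS ρ wρ Γ).n γ₀ a₀ d₀, L', hL', ?_, ?_⟩
  · exact hd.trans (congrArg (Env.add ρ _) (hdL.trans (congrArg (envSum ρ) hfst.symm)))
  · rwa [hsnd]

end Contexts

/-- Soundness of the interpretation: for any typed term `Γ ⊢ t : ω`, the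
relation `{(γ, s) | s ∈ [[t]]_γ}` is a simulation from `!Γ` to `ω*`. -/
theorem soundness (ρ : ℕ → Type) (wρ : ∀ i, IS (ρ i))
    {Γ : List Ty} {ω : Ty} (t : Tm Γ ω) :
    IsSim (ctxIS ρ wρ Γ) (tyIS ρ wρ ω) (fun γ s => s ∈ interp ρ t γ) := by
  induction t with
  | var v => exact ctxIS_isSim_oneAt v
  | app _ _ iht ihu => exact iht.app ihu
  | lam _ ih => exact ih.curry
end

section
/- (Invariance under β-reduction) For all simply typed terms t, u with Γ, x:ω ⊢ t : ω' and Γ ⊢ u : ω, and every environment γ for Γ, [[(λx.t)u]]_γ = [[t[u/x]]]_γ. -/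
universe u

variable (ρ : ℕ → Type) (wρ : ∀ i, IS (ρ i))

/-- Renamings between contexts. -/
def Ren (Γ Δ : List Ty) := ∀ ω, Var Γ ω → Var Δ ω

def Ren.lift {Γ Δ : List Ty} {ω₀ : Ty} (r : Ren Γ Δ) : Ren (ω₀ :: Γ) (ω₀ :: Δ) :=
  fun _ v =>
    match v with
    | .vz => .vz
    | .vs v => .vs (r _ v)

def Tm.rename : {Γ Δ : List Ty} → Ren Γ Δ → {ω : Ty} → Tm Γ ω → Tm Δ ω
  | _, _, r, _, .var v => .var (r _ v)
  | _, _, r, _, .app t u => .app (t.rename r) (u.rename r)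
  | _, _, r, _, .lam t => .lam (t.rename (Ren.lift r))

/-- Substitutions between contexts. -/
def Subst (Γ Δ : List Ty) := ∀ ω, Var Γ ω → Tm Δ ω

def Subst.lift {Γ Δ : List Ty} {ω₀ : Ty} (σ : Subst Γ Δ) : Subst (ω₀ :: Γ) (ω₀ :: Δ) :=
  fun _ v =>
    match v with
    | .vz => .var .vz
    | .vs v => (σ _ v).rename (fun _ => .vs)

def Tm.subst : {Γ Δ : List Ty} → Subst Γ Δ → {ω : Ty} → Tm Γ ω → Tm Δ ω
  | _, _, σ, _, .var v => σ _ v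
  | _, _, σ, _, .app t u => .app (t.subst σ) (u.subst σ)
  | _, _, σ, _, .lam t => .lam (t.subst (Subst.lift σ))

def Subst.cons {Γ : List Ty} {ω₀ : Ty} (u : Tm Γ ω₀) : Subst (ω₀ :: Γ) Γ :=
  fun ω v =>
    match ω, v with
    | _, .vz => u
    | _, .vs v => .var v

/-- Capture-avoiding substitution of `u` for the first variable of `t`. -/
def subst1 {Γ : List Ty} {ω ω' : Ty} (t : Tm (ω :: Γ) ω') (u : Tm Γ ω) : Tm Γ ω' :=
  t.subst (Subst.cons u)


/-!
The proof goes through a semantic substitution lemma. Promoting a term `u` to a multiset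
`ν = [s₁, …, sₙ]` gives the set `u.promote ρ ν` of environments `γ₁ + ⋯ + γₙ` with
`sᵢ ∈ [[u]]_{γᵢ}`; this is how an application consumes its argument. Promoting a substitution
`σ : Subst Γ Δ` variable by variable gives, for every `δ : Env ρ Γ`, a set `σ.promote ρ δ` of
environments for `Δ`, additively in `δ`, and then `s ∈ [[t[σ]]]_γ` iff `s ∈ [[t]]_δ` for some `δ`
with `γ ∈ σ.promote ρ δ`. This is proved by induction on `t`: additivity handles applications,
and under a binder one needs that weakening a term only adds an empty multiset to its
environments, which is in turn the substitution lemma for renamings. For `σ = [u/x]`,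
`(Subst.cons u).promote ρ (ν, δ) = δ + u.promote ρ ν` is exactly the splitting of the environment
in the interpretation of `(λx.t)u`.
-/

open scoped Pointwise

theorem Set.singleton_add_image_inr {M N : Type*} [AddZeroClass M] [AddZeroClass N] (a : M)
    (S : Set N) : ({(a, 0)} : Set (M × N)) + AddMonoidHom.inr M N '' S = {a} ×ˢ S := by
  ext ⟨μ, γ⟩
  simp [Set.singleton_add, Prod.ext_iff, eq_comm, and_comm]

theorem Set.mem_multiset_sum_map_iff {ι E : Type*} [AddCommMonoid E] (F : ι → Set E)
    (ν : Multiset ι) (x : E) :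
    x ∈ (ν.map F).sum ↔ ∃ L : List (E × ι),
      (∀ p ∈ L, p.1 ∈ F p.2) ∧ (L.map Prod.snd : Multiset ι) = ν ∧ (L.map Prod.fst).sum = x := by
  constructor
  · induction ν using Multiset.induction generalizing x with
    | empty =>
      rintro rfl
      exact ⟨[], by simp, rfl, rfl⟩
    | cons s ν ih =>
      rw [Multiset.map_cons, Multiset.sum_cons]
      rintro ⟨a, ha, b, hb, rfl⟩
      obtain ⟨L, hL, rfl, rfl⟩ := ih b hb
      refine ⟨(a, s) :: L, ?_, rfl, List.sum_cons⟩
      simpa [ha] using hL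
  · rintro ⟨L, hL, rfl, rfl⟩
    rw [Multiset.map_coe, Multiset.sum_coe, List.map_map]
    exact Set.list_sum_mem_list_sum L (F ∘ Prod.snd) Prod.fst hL

instance Env.instAddCommMonoid : (Γ : List Ty) → AddCommMonoid (Env ρ Γ)
  | [] => inferInstanceAs (AddCommMonoid PUnit)
  | ω :: Γ =>
    letI := Env.instAddCommMonoid Γ
    inferInstanceAs (AddCommMonoid (Multiset (St ρ ω) × Env ρ Γ))

variable {ρ}

namespace Env

theorem add_eq_add : {Γ : List Ty} → (a b : Env ρ Γ) → Env.add ρ a b = a + b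
  | [], _, _ => rfl
  | _ :: _, a, b => congrArg (a.1 + b.1, ·) (add_eq_add a.2 b.2)

theorem zero_eq_zero : (Γ : List Ty) → Env.zero ρ Γ = 0
  | [] => rfl
  | _ :: Γ => congrArg ((0 : Multiset _), ·) (zero_eq_zero Γ)

variable {Γ : List Ty} {ω : Ty}

-- `Env ρ (ω :: Γ)` is a product only after unfolding `Env`, so `Prod.fst_add` etc. do not fire.
@[simp] theorem fst_zero : (0 : Env ρ (ω :: Γ)).1 = 0 := rfl

@[simp] theorem snd_zero : (0 : Env ρ (ω :: Γ)).2 = 0 := rfl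

@[simp] theorem fst_add (a b : Env ρ (ω :: Γ)) : (a + b).1 = a.1 + b.1 := rfl

@[simp] theorem snd_add (a b : Env ρ (ω :: Γ)) : (a + b).2 = a.2 + b.2 := rfl

def weaken (ω : Ty) : Env ρ Γ →+ Env ρ (ω :: Γ) := AddMonoidHom.inr _ _

end Env

theorem envSum_eq_sum {Γ : List Ty} (L : List (Env ρ Γ)) : envSum ρ L = L.sum := by
  induction L with
  | nil => exact Env.zero_eq_zero Γ
  | cons a L ih => rw [envSum, List.foldr_cons, List.sum_cons, ← ih, Env.add_eq_add]; rfl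

theorem oneAt_vz {Γ : List Ty} {ω : Ty} (s : St ρ ω) :
    oneAt ρ (.vz : Var (ω :: Γ) ω) s = ({s}, 0) :=
  congrArg _ (Env.zero_eq_zero Γ)

theorem oneAt_vs {Γ : List Ty} {ω ω' : Ty} (v : Var Γ ω) (s : St ρ ω) :
    oneAt ρ (.vs v : Var (ω' :: Γ) ω) s = (0, oneAt ρ v s) := rfl

theorem sum_map_oneAt_vz {Γ : List Ty} {ω : Ty} (ν : Multiset (St ρ ω)) :
    (ν.map (oneAt ρ (.vz : Var (ω :: Γ) ω))).sum = (ν, 0) := by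
  induction ν using Multiset.induction with
  | empty => rfl
  | cons s ν ih =>
    rw [Multiset.map_cons, Multiset.sum_cons, ih, oneAt_vz]
    exact congrArg₂ Prod.mk (Multiset.singleton_add s ν) (add_zero 0)

section Promotion

variable (ρ)

def Tm.promote {Γ : List Ty} {ω : Ty} (u : Tm Γ ω) (ν : Multiset (St ρ ω)) : Set (Env ρ Γ) :=
  (ν.map fun s => {γ | s ∈ interp ρ u γ}).sum

def Subst.promote : {Γ Δ : List Ty} → Subst Γ Δ → Env ρ Γ → Set (Env ρ Δ)
  | [], _, _, _ => 0
  | _ :: _, _, σ, δ => (σ _ .vz).promote ρ δ.1 + Subst.promote (fun _ v => σ _ (.vs v)) δ.2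

variable {ρ}

namespace Tm

variable {Γ : List Ty} {ω : Ty} (u : Tm Γ ω)

@[simp] theorem promote_zero : u.promote ρ 0 = 0 := Multiset.sum_zero

@[simp] theorem promote_add (ν₁ ν₂ : Multiset (St ρ ω)) :
    u.promote ρ (ν₁ + ν₂) = u.promote ρ ν₁ + u.promote ρ ν₂ := by
  simp only [promote, Multiset.map_add, Multiset.sum_add]

@[simp] theorem promote_singleton (s : St ρ ω) :
    u.promote ρ {s} = {γ | s ∈ interp ρ u γ} := by
  simp only [promote, Multiset.map_singleton, Multiset.sum_singleton]

theorem promote_var_vz (ν : Multiset (St ρ ω)) :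
    (Tm.var .vz : Tm (ω :: Γ) ω).promote ρ ν = {((ν, 0) : Env ρ (ω :: Γ))} := by
  have := Set.multiset_sum_singleton (ν.map (oneAt ρ (.vz : Var (ω :: Γ) ω)))
  rw [Multiset.map_map, sum_map_oneAt_vz, Function.comp_def] at this
  exact this

end Tm

namespace Subst

@[simp] theorem promote_zero : {Γ Δ : List Ty} → (σ : Subst Γ Δ) → σ.promote ρ 0 = 0
  | [], _, _ => rfl
  | _ :: _, _, σ => by
    simp only [Subst.promote, Env.fst_zero, Env.snd_zero, Tm.promote_zero,
      promote_zero (fun _ v => σ _ (.vs v)), add_zero]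

theorem promote_add : {Γ Δ : List Ty} → (σ : Subst Γ Δ) → (δ₁ δ₂ : Env ρ Γ) →
    σ.promote ρ (δ₁ + δ₂) = σ.promote ρ δ₁ + σ.promote ρ δ₂
  | [], _, _, _, _ => (add_zero 0).symm
  | _ :: _, _, σ, δ₁, δ₂ => by
    simp only [Subst.promote, Env.fst_add, Env.snd_add, Tm.promote_add,
      promote_add (fun _ v => σ _ (.vs v))]
    exact add_add_add_comm ..

theorem promote_oneAt : {Γ Δ : List Ty} → {ω : Ty} → (σ : Subst Γ Δ) → (v : Var Γ ω) →
    (s : St ρ ω) → σ.promote ρ (oneAt ρ v s) = {γ | s ∈ interp ρ (σ _ v) γ}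
  | _ :: _, _, _, σ, .vz, s => by
    simp only [Subst.promote, oneAt_vz, Tm.promote_singleton,
      promote_zero (fun _ v => σ _ (.vs v)), add_zero]
  | _ :: _, _, _, σ, .vs v, s => by
    simp only [Subst.promote, oneAt_vs, Tm.promote_zero, zero_add]
    exact promote_oneAt (fun _ v => σ _ (.vs v)) v s

end Subst

end Promotion

theorem mem_interp_var {Γ : List Ty} {ω : Ty} (v : Var Γ ω) (γ : Env ρ Γ) (s : St ρ ω) :
    s ∈ interp ρ (.var v) γ ↔ γ = oneAt ρ v s := Iff.rfl

theorem mem_interp_app {Γ : List Ty} {ω ω' : Ty} (t : Tm Γ (.arrow ω ω')) (u : Tm Γ ω)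
    (γ : Env ρ Γ) (s : St ρ ω') :
    s ∈ interp ρ (.app t u) γ ↔ ∃ γ₀ γ₁ ν,
      (ν, s) ∈ interp ρ t γ₀ ∧ γ₁ ∈ u.promote ρ ν ∧ γ = γ₀ + γ₁ := by
  simp only [interp, Set.mem_ofPred_eq, Env.add_eq_add, envSum_eq_sum, Tm.promote,
    Set.mem_multiset_sum_map_iff]
  constructor
  · rintro ⟨γ₀, L, hL, rfl, ht⟩
    exact ⟨γ₀, _, _, ht, ⟨L, hL, rfl, rfl⟩, rfl⟩
  · rintro ⟨γ₀, _, _, ht, ⟨L, hL, rfl, rfl⟩, rfl⟩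
    exact ⟨γ₀, L, hL, rfl, ht⟩

variable (ρ) in
/-- `Subst.lift σ` weakens the terms of `σ`, so the substitution lemma for `σ` under a binder
needs this of every `σ ω v`. -/
def Tm.WeakeningInvariant {Γ : List Ty} {ω : Ty} (u : Tm Γ ω) : Prop :=
  ∀ (ω₀ : Ty) (s : St ρ ω),
    {γ | s ∈ interp ρ (u.rename fun _ => .vs (ω' := ω₀)) γ} =
      Env.weaken ω₀ '' {γ | s ∈ interp ρ u γ}

section Weakening

variable {Γ Δ : List Ty} {ω₀ : Ty}

theorem Tm.weakeningInvariant_var {ω : Ty} (v : Var Γ ω) :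
    (Tm.var v).WeakeningInvariant ρ := by
  intro ω₀ s
  change {γ | γ = oneAt ρ (.vs v) s} = Env.weaken ω₀ '' {γ | γ = oneAt ρ v s}
  rw [Set.ofPred_eq_eq_singleton, Set.ofPred_eq_eq_singleton, Set.image_singleton]
  rfl

theorem Tm.promote_rename_vs {ω : Ty} {u : Tm Γ ω} (hu : u.WeakeningInvariant ρ)
    (ν : Multiset (St ρ ω)) :
    (u.rename fun _ => .vs (ω' := ω₀)).promote ρ ν = Env.weaken ω₀ '' u.promote ρ ν := by
  simp only [Tm.promote, hu ω₀, Set.image_multiset_sum, Multiset.map_map, Function.comp_def]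

theorem Subst.promote_rename_vs : {Γ : List Ty} → (σ : Subst Γ Δ) →
    (∀ ω v, (σ ω v).WeakeningInvariant ρ) → (δ : Env ρ Γ) →
    Subst.promote ρ (fun ω v => (σ ω v).rename fun _ => .vs (ω' := ω₀)) δ =
      Env.weaken ω₀ '' σ.promote ρ δ
  | [], _, _, _ => by simp [Subst.promote, Set.singleton_zero]
  | _ :: _, σ, hσ, δ => by
    simp only [Subst.promote, Set.image_add, Tm.promote_rename_vs (hσ _ _),
      Subst.promote_rename_vs (fun _ v => σ _ (.vs v)) (fun _ v => hσ _ _)]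

theorem Subst.promote_lift {σ : Subst Γ Δ} (hσ : ∀ ω v, (σ ω v).WeakeningInvariant ρ)
    (ν : Multiset (St ρ ω₀)) (δ : Env ρ Γ) :
    (Subst.lift σ).promote ρ ((ν, δ) : Env ρ (ω₀ :: Γ)) = {ν} ×ˢ σ.promote ρ δ := by
  change (Tm.var .vz).promote ρ ν + Subst.promote ρ (fun ω v => (σ ω v).rename fun _ => .vs) δ = _
  rw [Tm.promote_var_vz, Subst.promote_rename_vs σ hσ δ]
  exact Set.singleton_add_image_inr ν _

theorem Subst.promote_var : {Γ : List Ty} → (δ : Env ρ Γ) →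
    Subst.promote ρ (fun _ v => .var v) δ = {δ}
  | [], _ => rfl
  | ω :: Γ, (ν, δ) => by
    have hlift : (fun _ v => .var v : Subst (ω :: Γ) (ω :: Γ)) = Subst.lift fun _ v => .var v := by
      funext _ v
      cases v <;> rfl
    rw [hlift, Subst.promote_lift (fun _ v => Tm.weakeningInvariant_var v), Subst.promote_var]
    exact Set.singleton_prod_singleton

end Weakening

section Substitution

variable {Γ Δ : List Ty} {ω ω' : Ty}

theorem Subst.lift_var {ω₀ : Ty} (r : Ren Γ Δ) :
    Subst.lift (ω₀ := ω₀) (fun _ v => .var (r _ v)) = fun _ v => .var (Ren.lift r _ v) := by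
  funext _ v
  cases v <;> rfl

theorem Tm.rename_eq_subst (t : Tm Γ ω) :
    ∀ {Δ : List Ty} (r : Ren Γ Δ), t.rename r = t.subst fun _ v => .var (r _ v) := by
  induction t with
  | var v => exact fun _ => rfl
  | app t u iht ihu => exact fun r => congrArg₂ Tm.app (iht r) (ihu r)
  | lam t iht =>
    intro Δ r
    change Tm.lam _ = Tm.lam _
    rw [iht, Subst.lift_var]

theorem Tm.mem_promote_subst {u : Tm Γ ω} {σ : Subst Γ Δ}
    (hu : ∀ γ s, s ∈ interp ρ (u.subst σ) γ ↔ ∃ δ, γ ∈ σ.promote ρ δ ∧ s ∈ interp ρ u δ)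
    (ν : Multiset (St ρ ω)) (γ : Env ρ Δ) :
    γ ∈ (u.subst σ).promote ρ ν ↔ ∃ ε ∈ u.promote ρ ν, γ ∈ σ.promote ρ ε := by
  induction ν using Multiset.induction generalizing γ with
  | empty =>
    simp only [Tm.promote_zero, Set.mem_zero, exists_eq_left, Subst.promote_zero]
  | cons s ν ih =>
    rw [← Multiset.singleton_add]
    simp only [Tm.promote_add, Tm.promote_singleton, Set.mem_add, Set.mem_ofPred_eq, hu, ih]
    constructor
    · rintro ⟨γ₁, ⟨δ, hγ₁, hδ⟩, γ₂, ⟨ε, hε, hγ₂⟩, rfl⟩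
      exact ⟨δ + ε, ⟨δ, hδ, ε, hε, rfl⟩, σ.promote_add δ ε ▸ Set.add_mem_add hγ₁ hγ₂⟩
    · rintro ⟨_, ⟨δ, hδ, ε, hε, rfl⟩, hγ⟩
      rw [Subst.promote_add] at hγ
      obtain ⟨γ₁, hγ₁, γ₂, hγ₂, rfl⟩ := hγ
      exact ⟨γ₁, ⟨δ, hγ₁, hδ⟩, γ₂, ⟨ε, hε, hγ₂⟩, rfl⟩

theorem mem_interp_subst_var (σ : Subst Γ Δ) (v : Var Γ ω) (γ : Env ρ Δ) (s : St ρ ω) :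
    s ∈ interp ρ ((Tm.var v).subst σ) γ ↔ ∃ δ, γ ∈ σ.promote ρ δ ∧ s ∈ interp ρ (.var v) δ := by
  simp only [mem_interp_var, exists_eq_right, Subst.promote_oneAt]
  rfl

theorem mem_interp_subst_app (σ : Subst Γ Δ) {t : Tm Γ (.arrow ω ω')} {u : Tm Γ ω}
    (ht : ∀ γ s, s ∈ interp ρ (t.subst σ) γ ↔ ∃ δ, γ ∈ σ.promote ρ δ ∧ s ∈ interp ρ t δ)
    (hu : ∀ γ s, s ∈ interp ρ (u.subst σ) γ ↔ ∃ δ, γ ∈ σ.promote ρ δ ∧ s ∈ interp ρ u δ)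
    (γ : Env ρ Δ) (s : St ρ ω') :
    s ∈ interp ρ ((Tm.app t u).subst σ) γ ↔
      ∃ δ, γ ∈ σ.promote ρ δ ∧ s ∈ interp ρ (.app t u) δ := by
  simp only [Tm.subst, mem_interp_app, Tm.mem_promote_subst hu]
  constructor
  · rintro ⟨γ₀, γ₁, ν, hν, ⟨ε, hε, hγ₁⟩, rfl⟩
    obtain ⟨δ₀, hγ₀, hδ₀⟩ := (ht γ₀ _).mp hν
    exact ⟨δ₀ + ε, σ.promote_add δ₀ ε ▸ Set.add_mem_add hγ₀ hγ₁, δ₀, ε, ν, hδ₀, hε, rfl⟩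
  · rintro ⟨_, hγ, δ₀, ε, ν, hδ₀, hε, rfl⟩
    rw [Subst.promote_add] at hγ
    obtain ⟨γ₀, hγ₀, γ₁, hγ₁, rfl⟩ := hγ
    exact ⟨γ₀, γ₁, ν, (ht γ₀ _).mpr ⟨δ₀, hγ₀, hδ₀⟩, ⟨ε, hε, hγ₁⟩, rfl⟩

theorem mem_interp_subst_lam {σ : Subst Γ Δ} (hσ : ∀ ω v, (σ ω v).WeakeningInvariant ρ)
    {t : Tm (ω :: Γ) ω'}
    (ht : ∀ γ s, s ∈ interp ρ (t.subst (Subst.lift σ)) γ ↔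
      ∃ δ, γ ∈ (Subst.lift σ).promote ρ δ ∧ s ∈ interp ρ t δ)
    (γ : Env ρ Δ) (s : St ρ (.arrow ω ω')) :
    s ∈ interp ρ ((Tm.lam t).subst σ) γ ↔
      ∃ δ, γ ∈ σ.promote ρ δ ∧ s ∈ interp ρ (.lam t) δ := by
  change s.2 ∈ interp ρ (t.subst (Subst.lift σ)) (s.1, γ) ↔
    ∃ δ, γ ∈ σ.promote ρ δ ∧ s.2 ∈ interp ρ t (s.1, δ)
  refine (ht (s.1, γ) s.2).trans ⟨?_, ?_⟩
  · rintro ⟨⟨μ, δ⟩, hγ, hs⟩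
    rw [Subst.promote_lift hσ] at hγ
    obtain ⟨rfl : s.1 = μ, hγ⟩ := hγ
    exact ⟨δ, hγ, hs⟩
  · rintro ⟨δ, hγ, hs⟩
    refine ⟨(s.1, δ), ?_, hs⟩
    rw [Subst.promote_lift hσ]
    exact ⟨rfl, hγ⟩

theorem mem_interp_rename (t : Tm Γ ω) :
    ∀ {Δ : List Ty} (r : Ren Γ Δ) (γ : Env ρ Δ) (s : St ρ ω),
      s ∈ interp ρ (t.rename r) γ ↔
        ∃ δ, γ ∈ Subst.promote ρ (fun _ v => .var (r _ v)) δ ∧ s ∈ interp ρ t δ := by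
  simp only [Tm.rename_eq_subst]
  induction t with
  | var v => exact fun r => mem_interp_subst_var _ v
  | app t u iht ihu => exact fun r => mem_interp_subst_app _ (iht r) (ihu r)
  | lam t iht =>
    intro Δ r
    refine mem_interp_subst_lam (fun _ v => Tm.weakeningInvariant_var (r _ v)) ?_
    rw [Subst.lift_var]
    exact iht (Ren.lift r)

theorem Tm.weakeningInvariant (u : Tm Γ ω) : u.WeakeningInvariant ρ := by
  intro ω₀ s
  have hweaken (δ : Env ρ Γ) :
      Subst.promote ρ (fun _ v => .var (.vs v) : Subst Γ (ω₀ :: Γ)) δ = {Env.weaken ω₀ δ} := by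
    change Subst.promote ρ (fun _ v => (Tm.var v).rename fun _ => .vs) δ = _
    rw [Subst.promote_rename_vs _ (fun _ v => Tm.weakeningInvariant_var v), Subst.promote_var,
      Set.image_singleton]
  ext γ
  refine (mem_interp_rename u _ γ s).trans ?_
  simp only [hweaken, Set.mem_singleton_iff, Set.mem_image, Set.mem_ofPred_eq]
  exact exists_congr fun δ => by rw [and_comm, eq_comm]

theorem mem_interp_subst (t : Tm Γ ω) :
    ∀ {Δ : List Ty} (σ : Subst Γ Δ) (γ : Env ρ Δ) (s : St ρ ω),
      s ∈ interp ρ (t.subst σ) γ ↔ ∃ δ, γ ∈ σ.promote ρ δ ∧ s ∈ interp ρ t δ := by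
  induction t with
  | var v => exact fun σ => mem_interp_subst_var σ v
  | app t u iht ihu => exact fun σ => mem_interp_subst_app σ (iht σ) (ihu σ)
  | lam t iht =>
    exact fun σ => mem_interp_subst_lam (fun _ v => Tm.weakeningInvariant _) (iht (Subst.lift σ))

theorem Subst.promote_cons (u : Tm Γ ω) (ν : Multiset (St ρ ω)) (δ : Env ρ Γ) :
    (Subst.cons u).promote ρ ((ν, δ) : Env ρ (ω :: Γ)) = (δ + ·) '' u.promote ρ ν := by
  change u.promote ρ ν + Subst.promote ρ (fun _ v => .var v) δ = _
  rw [Subst.promote_var, add_comm, Set.singleton_add]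

end Substitution

/-- Invariance of the interpretation under β-reduction:
`[[(λx.t)u]]_γ = [[t[u/x]]]_γ`. -/
theorem beta_invariance (ρ : ℕ → Type) {Γ : List Ty} {ω ω' : Ty}
    (t : Tm (ω :: Γ) ω') (u : Tm Γ ω) (γ : Env ρ Γ) :
    interp ρ (Tm.app (Tm.lam t) u) γ = interp ρ (subst1 t u) γ := by
  ext s
  rw [mem_interp_app, subst1, mem_interp_subst]
  constructor
  · rintro ⟨γ₀, γ₁, ν, hs, hγ₁, rfl⟩
    exact ⟨(ν, γ₀), (Subst.promote_cons u ν γ₀).symm ▸ ⟨γ₁, hγ₁, rfl⟩, hs⟩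
  · rintro ⟨⟨ν, γ₀⟩, hγ, hs⟩
    rw [Subst.promote_cons] at hγ
    obtain ⟨γ₁, hγ₁, rfl⟩ := hγ
    exact ⟨γ₀, γ₁, ν, hs, hγ₁, rfl⟩
end

section
/- For interaction systems w₁ and w₂, the relation {(((s₁,s₂), s₁), s₂)} ⊆ ((S₁×S₂) × S₁) × S₂ is a simulation from (w₁ ⊸ w₂) ⊗ w₁ to w₂ (the evaluation/counit of the adjunction). -/
universe u

/-- The evaluation (counit of the tensor–lolli adjunction): the relation
`{(((s₁,s₂), s₁), s₂)}` is a simulation from `(w₁ ⊸ w₂) ⊗ w₁` to `w₂`. -/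
theorem eval_isSim {S₁ S₂ : Type u} (w₁ : IS S₁) (w₂ : IS S₂) :
    IsSim (tensor (lolli w₁ w₂) w₁) w₂
      (fun p s₂ => p.2 = p.1.1 ∧ s₂ = p.1.2) := by
  rintro ⟨⟨s₁, s₂⟩, s₁'⟩ s₂' ⟨h1, h2⟩ ⟨⟨f, G⟩, a₁⟩
  dsimp at h1 h2
  subst h1 h2
  exact ⟨f a₁, fun d₂ => ⟨⟨⟨a₁, d₂⟩, G a₁ d₂⟩, rfl, rfl⟩⟩
end
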